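/- The function w(x) = w₁(x, θ(x)) is differentiable on (0.37613, 0.58870) with derivative w′(x) = −4·(x + θ(x)), and w is strictly decreasing on [0.37613, 0.58870]. -/

import Mathlib

open scoped Classical

/-- The Gaussian error function `erf x = (2/√π) ∫₀ˣ exp(−t²) dt`. -/
noncomputable def erf (x : ℝ) : ℝ :=
  (2 / Real.sqrt Real.pi) * ∫ t in (0:ℝ)..x, Real.exp (-t ^ 2)

/-- `w₁(x,θ) = −2x² + θ² + log(1 + erf(2x+θ))`. -/
noncomputable def w₁ (x θ : ℝ) : ℝ :=
  -2 * x ^ 2 + θ ^ 2 + Real.log (1 + erf (2 * x + θ))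

/-- `w₂(x,θ) = θ + (1/√π)·exp(−(2x+θ)²)/(1 + erf(2x+θ))`. -/
noncomputable def w₂ (x θ : ℝ) : ℝ :=
  θ + (1 / Real.sqrt Real.pi) * (Real.exp (-(2 * x + θ) ^ 2) / (1 + erf (2 * x + θ)))

/-- `θ(x)`: the unique solution `θ` of `w₂(x,θ) = 0` (junk value `0` if it does not
exist uniquely). -/
noncomputable def thetaOf (x : ℝ) : ℝ :=
  if h : ∃! θ : ℝ, w₂ x θ = 0 then h.choose else 0

/-- `w(x) = w₁(x, θ(x))`. -/
noncomputable def wfun (x : ℝ) : ℝ := w₁ x (thetaOf x)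


/-!
Put `A s = ∫ t in Iic s, exp (-t²)` (`gaussIic`), so that `1 + erf s = (2/√π) A s`, and
`g s = exp (-s²) / (2 A s)` (`invMills`). Then `w₂ x θ = θ + g (2x + θ)`, i.e. `w₂ x θ = 0` says
that `s = 2x + θ` solves `(s + g s) / 2 = x`. The derivative of `s ↦ (s + g s) / 2` is
`(2A² - 2sAE - E²) / (4A²)` with `E = exp (-s²)`; its numerator and `A + sE / (1 + 2s²)` both
have positive derivative and vanish at `-∞`, so the map is strictly increasing with nonvanishing
derivative, and its range contains `(0, ∞)`. Hence `s(x) = 2x + θ(x)` is differentiable for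
`x > 0`, and in `w x = -2x² + (s x - 2x)² + log (1 + erf (s x))` the terms with `s'` cancel
because `∂w₁/∂θ = 2 w₂ = 0`, leaving `w' x = -4 (x + θ x)`. This is negative iff `g x < x`,
which holds for `x ≥ 0.37613` as `g` is decreasing and `g 0.37613 < 0.37613`.
-/

open Real Set Filter Topology MeasureTheory

lemma pos_of_hasDerivAt_pos_of_tendsto_atBot {f f' : ℝ → ℝ}
    (hf : ∀ x, HasDerivAt f (f' x) x) (hf' : ∀ x, 0 < f' x) (hlim : Tendsto f atBot (𝓝 0))
    (x : ℝ) : 0 < f x := by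
  have hmono : StrictMono f := strictMono_of_deriv_pos fun y => (hf y).deriv ▸ hf' y
  exact (hmono.monotone.le_of_tendsto hlim (x - 1)).trans_lt (hmono (by linarith))

lemma tendsto_exp_neg_sq_atBot : Tendsto (fun s : ℝ => exp (-s ^ 2)) atBot (𝓝 0) := by
  refine tendsto_exp_atBot.comp (tendsto_atBot_mono' atBot ?_ tendsto_id)
  filter_upwards [eventually_le_atBot (-1)] with s hs
  show -s ^ 2 ≤ s
  nlinarith

lemma hasDerivAt_exp_neg_sq (u : ℝ) :
    HasDerivAt (fun v : ℝ => exp (-v ^ 2)) (-(2 * u) * exp (-u ^ 2)) u := by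
  simpa [mul_comm] using ((hasDerivAt_pow 2 u).fun_neg).exp

lemma integrable_exp_neg_sq : Integrable fun t : ℝ => exp (-t ^ 2) := by
  simpa using integrable_exp_neg_mul_sq one_pos

noncomputable def gaussIic (s : ℝ) : ℝ := ∫ t in Iic s, exp (-t ^ 2)

lemma gaussIic_sub (a b : ℝ) : gaussIic b - gaussIic a = ∫ t in a..b, exp (-t ^ 2) :=
  intervalIntegral.integral_Iic_sub_Iic integrable_exp_neg_sq.integrableOn
    integrable_exp_neg_sq.integrableOn

lemma hasDerivAt_gaussIic (s : ℝ) : HasDerivAt gaussIic (exp (-s ^ 2)) s := by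
  have h := ((show Continuous fun t : ℝ => exp (-t ^ 2) by fun_prop).integral_hasStrictDerivAt
    0 s).hasDerivAt.const_add (gaussIic 0)
  refine h.congr_of_eventuallyEq (Eventually.of_forall fun t => ?_)
  simp only [← gaussIic_sub 0 t, add_sub_cancel]

lemma gaussIic_pos (s : ℝ) : 0 < gaussIic s := by
  have : NeZero (volume.restrict (Iic s)) := ⟨by simp⟩
  exact integral_exp_pos integrable_exp_neg_sq.integrableOn

lemma gaussIic_zero : gaussIic 0 = √π / 2 := by
  have hsymm : gaussIic 0 = ∫ t in Ioi (0 : ℝ), exp (-t ^ 2) := by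
    rw [gaussIic, ← neg_zero, ← integral_comp_neg_Iic, neg_zero]
    simp only [even_two, Even.neg_pow]
  have htotal : gaussIic 0 + ∫ t in Ioi (0 : ℝ), exp (-t ^ 2) = √π := by
    rw [gaussIic, intervalIntegral.integral_Iic_add_Ioi integrable_exp_neg_sq.integrableOn
      integrable_exp_neg_sq.integrableOn]
    simpa using integral_gaussian 1
  linarith

lemma one_add_erf (s : ℝ) : 1 + erf s = 2 / √π * gaussIic s := by
  have : 0 < √π := by positivity
  rw [erf, ← gaussIic_sub 0 s, gaussIic_zero]
  field_simp
  ring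

lemma add_mul_exp_neg_sq_le_gaussIic {c : ℝ} (hc : 0 ≤ c) :
    √π / 2 + c * exp (-c ^ 2) ≤ gaussIic c := by
  have hint : ∫ _ in (0 : ℝ)..c, exp (-c ^ 2) ≤ ∫ t in (0 : ℝ)..c, exp (-t ^ 2) :=
    intervalIntegral.integral_mono_on hc intervalIntegrable_const
      ((by fun_prop : Continuous fun t : ℝ => exp (-t ^ 2)).intervalIntegrable 0 c) fun t ht =>
        exp_le_exp.2 (by nlinarith [ht.1, ht.2])
  rw [intervalIntegral.integral_const, smul_eq_mul, sub_zero, ← gaussIic_sub,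
    gaussIic_zero] at hint
  linarith

lemma integral_Iic_mul_exp_neg_sq (s : ℝ) :
    ∫ t in Iic s, t * exp (-t ^ 2) = -exp (-s ^ 2) / 2 := by
  have hderiv (t : ℝ) : HasDerivAt (fun u : ℝ => -exp (-u ^ 2) / 2) (t * exp (-t ^ 2)) t :=
    ((hasDerivAt_exp_neg_sq t).fun_neg.div_const 2).congr_deriv (by ring)
  have hint : Integrable fun t : ℝ => t * exp (-t ^ 2) := by
    simpa using integrable_mul_exp_neg_mul_sq one_pos
  have hlim : Tendsto (fun u : ℝ => -exp (-u ^ 2) / 2) atBot (𝓝 0) := by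
    simpa using (tendsto_exp_neg_sq_atBot.neg).div_const 2
  simpa using integral_Iic_of_hasDerivAt_of_tendsto' (fun t _ => hderiv t) hint.integrableOn hlim

lemma two_mul_mul_gaussIic_add_exp_nonneg (s : ℝ) : 0 ≤ 2 * s * gaussIic s + exp (-s ^ 2) := by
  rcases le_or_gt 0 s with hs | hs
  · have := gaussIic_pos s
    positivity
  -- `1 ≤ t / s` on `Iic s`
  have hle : gaussIic s ≤ ∫ t in Iic s, t * exp (-t ^ 2) / s := by
    refine setIntegral_mono_on integrable_exp_neg_sq.integrableOn ?_ measurableSet_Iic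
      fun t (ht : t ≤ s) => ?_
    · simpa using ((integrable_mul_exp_neg_mul_sq one_pos).div_const s).integrableOn
    · rw [le_div_iff_of_neg hs]
      nlinarith [exp_pos (-t ^ 2)]
  rw [integral_div, integral_Iic_mul_exp_neg_sq, le_div_iff_of_neg hs] at hle
  linarith

lemma tendsto_gaussIic_atBot : Tendsto gaussIic atBot (𝓝 0) := by
  refine squeeze_zero' (Eventually.of_forall fun s => (gaussIic_pos s).le) ?_
    (by simpa using tendsto_exp_neg_sq_atBot.div_const 2)
  filter_upwards [eventually_le_atBot (-1)] with s hs
  nlinarith [two_mul_mul_gaussIic_add_exp_nonneg s, gaussIic_pos s]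

lemma gaussIic_add_mul_exp_div_pos (s : ℝ) :
    0 < gaussIic s + s * exp (-s ^ 2) / (1 + 2 * s ^ 2) := by
  refine pos_of_hasDerivAt_pos_of_tendsto_atBot
    (f := fun u => gaussIic u + u * exp (-u ^ 2) / (1 + 2 * u ^ 2))
    (f' := fun u => 2 * exp (-u ^ 2) / (1 + 2 * u ^ 2) ^ 2)
    (fun u => ?_) (fun u => by positivity) ?_ s
  · have hden : (1 : ℝ) + 2 * u ^ 2 ≠ 0 := by positivity
    have hexp := hasDerivAt_exp_neg_sq u
    have := (hasDerivAt_gaussIic u).add (((hasDerivAt_id u).mul hexp).div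
      (((hasDerivAt_pow 2 u).const_mul 2).const_add 1) hden)
    refine this.congr_deriv ?_
    simp only [id, Pi.mul_apply]
    field_simp
    ring
  · have hrat : Tendsto (fun u : ℝ => u * exp (-u ^ 2) / (1 + 2 * u ^ 2)) atBot (𝓝 0) := by
      refine squeeze_zero_norm (fun u => ?_) tendsto_exp_neg_sq_atBot
      have hden : (0 : ℝ) < 1 + 2 * u ^ 2 := by positivity
      rw [Real.norm_eq_abs, abs_div, abs_mul, abs_of_pos (exp_pos _), abs_of_pos hden,
        div_le_iff₀ hden, mul_comm]
      gcongr
      nlinarith [abs_nonneg u, sq_abs u]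
    simpa using tendsto_gaussIic_atBot.add hrat

lemma two_mul_gaussIic_sq_sub_pos (s : ℝ) :
    0 < 2 * gaussIic s ^ 2 - 2 * s * gaussIic s * exp (-s ^ 2) - exp (-s ^ 2) ^ 2 := by
  refine pos_of_hasDerivAt_pos_of_tendsto_atBot
    (f := fun u => 2 * gaussIic u ^ 2 - 2 * u * gaussIic u * exp (-u ^ 2) - exp (-u ^ 2) ^ 2)
    (f' := fun u => 2 * exp (-u ^ 2) * (1 + 2 * u ^ 2) *
      (gaussIic u + u * exp (-u ^ 2) / (1 + 2 * u ^ 2))) (fun u => ?_)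
    (fun u => by have := gaussIic_add_mul_exp_div_pos u; positivity) ?_ s
  · have hexp := hasDerivAt_exp_neg_sq u
    have hA := hasDerivAt_gaussIic u
    have := (((hA.pow 2).const_mul 2).sub ((((hasDerivAt_id u).const_mul 2).mul hA).mul hexp)).sub
      (hexp.pow 2)
    refine this.congr_deriv ?_
    have hden : (1 : ℝ) + 2 * u ^ 2 ≠ 0 := by positivity
    simp only [id, Pi.mul_apply]
    field_simp
    ring
  · refine squeeze_zero_norm' ?_ (by simpa using (tendsto_exp_neg_sq_atBot.pow 2).const_mul 3)
    filter_upwards [eventually_le_atBot (-1)] with u hu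
    have hA := gaussIic_pos u
    have hE := exp_pos (-u ^ 2)
    have hmills := two_mul_mul_gaussIic_add_exp_nonneg u
    have h2A : 2 * gaussIic u ≤ exp (-u ^ 2) := by nlinarith
    rw [Real.norm_eq_abs, abs_le]
    constructor <;> nlinarith [mul_le_mul_of_nonneg_right h2A hA.le,
      mul_le_mul_of_nonneg_right h2A hE.le, mul_nonneg hmills hE.le, mul_pos hA hE]

noncomputable def invMills (s : ℝ) : ℝ := exp (-s ^ 2) / (2 * gaussIic s)

lemma invMills_pos (s : ℝ) : 0 < invMills s := by
  have := gaussIic_pos s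
  unfold invMills
  positivity

lemma hasDerivAt_invMills (s : ℝ) :
    HasDerivAt invMills
      (-(exp (-s ^ 2) * (2 * s * gaussIic s + exp (-s ^ 2))) / (2 * gaussIic s ^ 2)) s := by
  have hA := gaussIic_pos s
  refine ((hasDerivAt_exp_neg_sq s).div ((hasDerivAt_gaussIic s).const_mul 2)
    (by positivity)).congr_deriv ?_
  field_simp
  ring

lemma invMills_antitone : Antitone invMills := by
  refine antitone_of_deriv_nonpos (fun s => (hasDerivAt_invMills s).differentiableAt) fun s => ?_
  rw [(hasDerivAt_invMills s).deriv]
  have := two_mul_mul_gaussIic_add_exp_nonneg s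
  have := gaussIic_pos s
  exact div_nonpos_of_nonpos_of_nonneg (neg_nonpos.2 (by positivity)) (by positivity)

lemma invMills_lt_self_of_lt {c : ℝ} (hc : 0 < c) 
    (h : exp (-c ^ 2) * (1 - 2 * c ^ 2) < c * √π) :
    invMills c < c := by
  rw [invMills, div_lt_iff₀ (by linarith [gaussIic_pos c])]
  nlinarith [mul_le_mul_of_nonneg_left (add_mul_exp_neg_sq_le_gaussIic hc.le) hc.le]

lemma hasDerivAt_log_one_add_erf (s : ℝ) :
    HasDerivAt (fun u => log (1 + erf u)) (2 * invMills s) s := by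
  have hA := gaussIic_pos s
  have hπ : 0 < √π := by positivity
  simp only [one_add_erf]
  refine (((hasDerivAt_gaussIic s).const_mul (2 / √π)).log (by positivity)).congr_deriv ?_
  unfold invMills
  field_simp

noncomputable def optArgInv (s : ℝ) : ℝ := (s + invMills s) / 2

lemma w₂_eq (x θ : ℝ) : w₂ x θ = 2 * (optArgInv (2 * x + θ) - x) := by
  have := gaussIic_pos (2 * x + θ)
  have hπ : 0 < √π := by positivity
  rw [w₂, one_add_erf, optArgInv, invMills]
  field_simp
  ring

lemma hasDerivAt_optArgInv (s : ℝ) :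
    HasDerivAt optArgInv
      ((2 * gaussIic s ^ 2 - 2 * s * gaussIic s * exp (-s ^ 2) - exp (-s ^ 2) ^ 2) /
        (4 * gaussIic s ^ 2)) s := by
  have hA := gaussIic_pos s
  refine (((hasDerivAt_id s).add (hasDerivAt_invMills s)).div_const 2).congr_deriv ?_
  field_simp
  ring

lemma optArgInv_strictMono : StrictMono optArgInv := by
  refine strictMono_of_deriv_pos fun s => ?_
  rw [(hasDerivAt_optArgInv s).deriv]
  have := two_mul_gaussIic_sq_sub_pos s
  have := gaussIic_pos s
  positivity

lemma continuous_optArgInv : Continuous optArgInv :=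
  continuous_iff_continuousAt.2 fun s => (hasDerivAt_optArgInv s).continuousAt

lemma optArgInv_lt_of_neg {s : ℝ} (hs : s < 0) : optArgInv s < 1 / (-4 * s) := by
  have hA := gaussIic_pos s
  have hP := gaussIic_add_mul_exp_div_pos s
  have hgA : invMills s * (2 * gaussIic s) = exp (-s ^ 2) := div_mul_cancel₀ _ (by positivity)
  rw [add_div', lt_div_iff₀ (by positivity)] at hP
  · have hprod : 0 < (1 + 2 * s ^ 2 + 2 * s * invMills s) * gaussIic s := by
      rw [← hgA] at hP
      linarith
    have := pos_of_mul_pos_left hprod hA.le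
    rw [optArgInv, div_lt_div_iff₀ two_pos (by linarith)]
    nlinarith
  · positivity

lemma mem_range_optArgInv {x : ℝ} (hx : 0 < x) : x ∈ range optArgInv := by
  refine mem_range_of_exists_le_of_exists_ge continuous_optArgInv ⟨-(4 * x)⁻¹, ?_⟩
    ⟨2 * x, ?_⟩
  · have := optArgInv_lt_of_neg (s := -(4 * x)⁻¹) (by simpa using hx)
    have hx' : 1 / (-4 * -(4 * x)⁻¹) = x := by field_simp
    exact (hx' ▸ this).le
  · have := invMills_pos (2 * x)
    rw [optArgInv]
    linarith

lemma existsUnique_w₂_eq_zero {x : ℝ} (hx : 0 < x) : ∃! θ, w₂ x θ = 0 := by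
  obtain ⟨s, hs⟩ := mem_range_optArgInv hx
  refine ⟨s - 2 * x, by simp [w₂_eq, hs], fun θ (hθ : w₂ x θ = 0) => ?_⟩
  rw [w₂_eq, mul_eq_zero, sub_eq_zero, ← hs] at hθ
  have := optArgInv_strictMono.injective (hθ.resolve_left two_ne_zero)
  linarith

lemma w₂_thetaOf {x : ℝ} (hx : 0 < x) : w₂ x (thetaOf x) = 0 := by
  have h := existsUnique_w₂_eq_zero hx
  rw [thetaOf, dif_pos h]
  exact h.choose_spec.1

noncomputable def optArg (x : ℝ) : ℝ := 2 * x + thetaOf x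

lemma optArgInv_optArg {x : ℝ} (hx : 0 < x) : optArgInv (optArg x) = x := by
  have := w₂_thetaOf hx
  rw [w₂_eq] at this
  rw [optArg]
  linarith

lemma strictMonoOn_optArg : StrictMonoOn optArg (Ioi 0) := fun x hx y hy hxy => by
  rwa [← optArgInv_strictMono.lt_iff_lt, optArgInv_optArg hx, optArgInv_optArg hy]

-- `optArg` maps `Ioi 0` onto the open set `optArgInv ⁻¹' Ioi 0`, so it cannot jump.
lemma continuousAt_optArg {x : ℝ} (hx : 0 < x) : ContinuousAt optArg x := by
  refine strictMonoOn_optArg.continuousAt_of_image_mem_nhds (Ioi_mem_nhds hx) ?_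
  have hopen : IsOpen (optArgInv ⁻¹' Ioi 0) := isOpen_Ioi.preimage continuous_optArgInv
  refine mem_of_superset (hopen.mem_nhds ?_) fun s (hs : 0 < optArgInv s) => ?_
  · simpa [mem_preimage, optArgInv_optArg hx] using hx
  · exact ⟨optArgInv s, hs, optArgInv_strictMono.injective (optArgInv_optArg hs)⟩

lemma differentiableAt_optArg {x : ℝ} (hx : 0 < x) : DifferentiableAt ℝ optArg x := by
  have hD := two_mul_gaussIic_sq_sub_pos (optArg x)
  have hA := gaussIic_pos (optArg x)
  exact (HasDerivAt.of_local_left_inverse (continuousAt_optArg hx)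
    (hasDerivAt_optArgInv (optArg x)) (by positivity)
    ((eventually_gt_nhds hx).mono fun _ hy => optArgInv_optArg hy)).differentiableAt

-- Envelope theorem: the terms carrying `deriv optArg x` cancel because `w₂ x (thetaOf x) = 0`.
lemma hasDerivAt_wfun {x : ℝ} (hx : 0 < x) : HasDerivAt wfun (-4 * (x + thetaOf x)) x := by
  have hwfun :
      wfun = fun y => -2 * y ^ 2 + (optArg y - 2 * y) ^ 2 + log (1 + erf (optArg y)) := by
    funext y
    simp only [wfun, w₁, optArg]
    ring_nf
  have hσ := (differentiableAt_optArg hx).hasDerivAt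
  have h := (((hasDerivAt_pow 2 x).const_mul (-2)).add
    ((hσ.sub ((hasDerivAt_id x).const_mul 2)).pow 2)).add
    ((hasDerivAt_log_one_add_erf (optArg x)).comp x hσ)
  rw [hwfun]
  refine h.congr_deriv ?_
  have hroot := optArgInv_optArg hx
  have hθ : thetaOf x = optArg x - 2 * x := by rw [optArg]; ring
  rw [optArgInv] at hroot
  simp only [Pi.sub_apply, id, hθ]
  push_cast
  linear_combination 4 * deriv optArg x * hroot

lemma neg_lt_thetaOf {x : ℝ} (hx : 0 < x) (hmills : invMills x < x) : -x < thetaOf x := by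
  have : optArgInv x < optArgInv (optArg x) := by
    rw [optArgInv_optArg hx, optArgInv]
    linarith
  have := optArgInv_strictMono.lt_iff_lt.1 this
  rw [optArg] at this
  linarith

lemma strictAntiOn_wfun {c : ℝ} (hc : 0 < c) (hmills : invMills c < c) :
    StrictAntiOn wfun (Ici c) := by
  refine strictAntiOn_of_deriv_neg (convex_Ici c)
    (fun x hx => (hasDerivAt_wfun (hc.trans_le hx)).continuousAt.continuousWithinAt)
    fun x hx => ?_
  rw [interior_Ici] at hx
  rw [(hasDerivAt_wfun (hc.trans hx)).deriv]
  have := neg_lt_thetaOf (hc.trans hx) ((invMills_antitone hx.le).trans_lt (hmills.trans hx))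
  linarith

lemma invMills_lt_self : invMills 0.37613 < 0.37613 := by
  obtain ⟨c, hc⟩ : ∃ c : ℝ, c = 0.37613 := ⟨_, rfl⟩
  rw [← hc]
  refine invMills_lt_self_of_lt (by norm_num [hc]) ?_
  have hexp : exp (-c ^ 2) * (1 + c ^ 2) ≤ 1 := by
    rw [exp_neg, inv_mul_le_iff₀ (exp_pos _)]
    linarith [add_one_le_exp (c ^ 2)]
  have hπ : 1.7 < √π := lt_sqrt_of_sq_lt (by nlinarith [pi_gt_three])
  have hnum : 1 - 2 * c ^ 2 < 1.7 * c * (1 + c ^ 2) := by norm_num [hc]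
  refine lt_of_mul_lt_mul_right ?_ (by positivity : (0 : ℝ) ≤ 1 + c ^ 2)
  nlinarith [mul_le_mul_of_nonneg_right hexp (by norm_num [hc] : (0 : ℝ) ≤ 1 - 2 * c ^ 2),
    mul_lt_mul_of_pos_left hπ (by norm_num [hc] : (0 : ℝ) < c * (1 + c ^ 2))]

theorem stmt5 :
    (∀ x ∈ Set.Ioo (0.37613 : ℝ) 0.58870, HasDerivAt wfun (-4 * (x + thetaOf x)) x) ∧
    StrictAntiOn wfun (Set.Icc (0.37613 : ℝ) 0.58870) :=
  ⟨fun x hx => hasDerivAt_wfun (lt_trans (by norm_num) hx.1),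
    (strictAntiOn_wfun (by norm_num) invMills_lt_self).mono Icc_subset_Ici_self⟩
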